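/- arXiv:1301.1097 — 6 statements merged into one kernel-verified Lean document; each statement's English description precedes it below -/
import Mathlib

section
/- Let X be a binomial random variable with parameters n and p, and let a > 0. Then Pr(X < np - a) < exp(-a²/(2np)). -/
open scoped Classical
open Filter

/-- Number of edges of a finite simple graph. -/
noncomputable def edgeCount {V : Type*} [Fintype V] (G : SimpleGraph V) : ℕ :=
  G.edgeFinset.card

/-- `G` contains `k` pairwise edge-disjoint spanning trees. -/
def HasDisjSpanningTrees {V : Type*} (G : SimpleGraph V) (k : ℕ) : Prop :=
  ∃ f : Fin k → SimpleGraph V, (∀ i, f i ≤ G) ∧ (∀ i, (f i).IsTree) ∧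
    ∀ i j, i ≠ j → Disjoint (f i).edgeSet (f j).edgeSet

/-- Spanning tree packing number: the maximum number of pairwise
edge-disjoint spanning trees of `G`. -/
noncomputable def stp {V : Type*} (G : SimpleGraph V) : ℕ :=
  sSup {k | HasDisjSpanningTrees G k}

/-- Number of edges of `G` between `S` and its complement. -/
noncomputable def crossCount {V : Type*} [Fintype V] (G : SimpleGraph V) (S : Finset V) : ℕ :=
  ((S ×ˢ Sᶜ).filter fun e => G.Adj e.1 e.2).card

/-- Number of crossing edges of a partition `P` of the vertex set:
edges whose two endpoints lie in different parts of `P`. -/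
noncomputable def partCross {V : Type*} [Fintype V] (G : SimpleGraph V)
    (P : Finpartition (Finset.univ : Finset V)) : ℕ :=
  (G.edgeFinset.filter fun e => ∀ t ∈ P.parts, ¬ ∀ v ∈ e, v ∈ t).card

/-- Probability that the Erdős–Rényi random graph `G(n,p)` satisfies `Q`. -/
noncomputable def grProb (n : ℕ) (p : ℝ) (Q : SimpleGraph (Fin n) → Prop) : ℝ :=
  ∑ G : SimpleGraph (Fin n),
    if Q G then p ^ edgeCount G * (1 - p) ^ (n.choose 2 - edgeCount G) else 0


/-!
Chernoff's exponential-moment method. For every `t ≥ 0` the indicator of `{X < c}` is at most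
`exp (t * (c - X))`, so the lower tail is at most `exp (t * c) * E[exp (-t * X)]`, strictly because
the outcome `X = n` has positive mass and is not in the tail. For the binomial law this moment is
`(p * exp (-t) + 1 - p) ^ n ≤ exp (n * p * (t ^ 2 / 2 - t))`, using `exp (-t) ≤ 1 - t + t ^ 2 / 2`
and `1 + x ≤ exp x`; the choice `t = a / (n * p)` minimises the resulting exponent.
-/

open Finset Real

lemma Real.exp_neg_le_one_sub_add_sq_div_two {t : ℝ} (ht : 0 ≤ t) :
    exp (-t) ≤ 1 - t + t ^ 2 / 2 := by
  have hpos : 0 < 1 - t + t ^ 2 / 2 := by nlinarith [sq_nonneg (t - 1)]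
  rw [exp_neg, inv_le_iff_one_le_mul₀ (exp_pos t)]
  -- the product below is `1 + t ^ 4 / 4`
  calc 1 ≤ (1 - t + t ^ 2 / 2) * (1 + t + t ^ 2 / 2) := by nlinarith [pow_nonneg ht 4]
    _ ≤ (1 - t + t ^ 2 / 2) * exp t := by gcongr; exact quadratic_le_exp_of_nonneg ht

lemma sum_ite_lt_lt_exp_mul_sum_mul_exp {ι : Type*} {s : Finset ι} {w X : ι → ℝ} {c t : ℝ}
    (hw : ∀ i ∈ s, 0 ≤ w i) {j : ι} (hj : j ∈ s) (hwj : 0 < w j) (hcj : c ≤ X j) (ht : 0 ≤ t) :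
    ∑ i ∈ s, (if X i < c then w i else 0) < exp (t * c) * ∑ i ∈ s, w i * exp (-t * X i) := by
  rw [mul_sum]
  refine sum_lt_sum (fun i hi => ?_) ⟨j, hj, ?_⟩
  · split_ifs with hXi
    · calc w i ≤ w i * exp (t * (c - X i)) :=
            le_mul_of_one_le_right (hw i hi) (one_le_exp (mul_nonneg ht (sub_nonneg.2 hXi.le)))
        _ = exp (t * c) * (w i * exp (-t * X i)) := by rw [mul_left_comm, ← exp_add]; ring_nf
    · exact mul_nonneg (exp_pos _).le (mul_nonneg (hw i hi) (exp_pos _).le)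
  · rw [if_neg hcj.not_gt]
    positivity

lemma sum_range_choose_mul_pow_mul_exp (n : ℕ) (x y s : ℝ) :
    ∑ i ∈ range (n + 1), (n.choose i : ℝ) * x ^ i * y ^ (n - i) * exp (s * i)
      = (x * exp s + y) ^ n := by
  rw [add_pow]
  refine sum_congr rfl fun i _ => ?_
  rw [mul_comm s, exp_nat_mul, mul_pow]
  ring

lemma bernoulli_exp_moment_le {p : ℝ} (hp : 0 ≤ p) {t : ℝ} (ht : 0 ≤ t) :
    p * exp (-t) + (1 - p) ≤ exp (p * (t ^ 2 / 2 - t)) :=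
  calc p * exp (-t) + (1 - p) ≤ p * (1 - t + t ^ 2 / 2) + (1 - p) := by
        gcongr; exact exp_neg_le_one_sub_add_sq_div_two ht
    _ = p * (t ^ 2 / 2 - t) + 1 := by ring
    _ ≤ exp (p * (t ^ 2 / 2 - t)) := add_one_le_exp _

theorem chernoff_lower_tail (n : ℕ) (p a : ℝ)
    (hp0 : 0 ≤ p) (hp1 : p ≤ 1) (hnp : 0 < (n : ℝ) * p) (ha : 0 < a) :
    (∑ i ∈ Finset.range (n + 1),
        if (i : ℝ) < (n : ℝ) * p - a then
          (n.choose i : ℝ) * p ^ i * (1 - p) ^ (n - i) else 0)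
      < Real.exp (-a ^ 2 / (2 * n * p)) := by
  have hp : 0 < p := pos_of_mul_pos_right hnp (Nat.cast_nonneg n)
  set t := a / (n * p) with ht
  have ht0 : 0 ≤ t := by positivity
  have hmoment : (p * exp (-t) + (1 - p)) ^ n ≤ exp (n * (p * (t ^ 2 / 2 - t))) := by
    rw [exp_nat_mul]
    gcongr
    exact bernoulli_exp_moment_le hp0 ht0
  calc _ < exp (t * (n * p - a)) * ∑ i ∈ range (n + 1),
          (n.choose i : ℝ) * p ^ i * (1 - p) ^ (n - i) * exp (-t * i) := by
        refine sum_ite_lt_lt_exp_mul_sum_mul_exp (fun i _ => ?_) (self_mem_range_succ n)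
          (by simp [hp]) (by nlinarith) ht0
        have : 0 ≤ 1 - p := by linarith
        positivity
    _ = exp (t * (n * p - a)) * (p * exp (-t) + (1 - p)) ^ n := by
        rw [sum_range_choose_mul_pow_mul_exp]
    _ ≤ exp (t * (n * p - a)) * exp (n * (p * (t ^ 2 / 2 - t))) := by gcongr
    _ = exp (-a ^ 2 / (2 * n * p)) := by
        rw [← exp_add, ht]
        congr 1
        field_simp
        ring
end

section
/- If p(n) = (1.1 log n)/(n - ⌊log n/30⌋), then Pr(Bin(n-1, p) = ⌊log n/30⌋) = ω(1/n), i.e., n · Pr(Bin(n-1,p) = ⌊log n/30⌋) → ∞ as n → ∞. -/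
open scoped Classical
open Filter

/-!
Write `L = log n`, `k = ⌊L/30⌋` and `λ = (n - k) p = 1.1 L`. The binomial coefficient gives
`C(n-1, k) p^k ≥ (λ/k)^k ≥ 33^k`, and `log (1 - p) ≥ -p/(1-p)` gives
`(1 - p)^(n-1-k) ≥ exp (-λ/(1-p)) ≥ exp (-1.101 L)` once `p ≤ 1/2000`.
Since `log 33 / 30 > 0.115`, the factor `33^k` beats the excess `0.101 L` of the exponent, so
`n · Pr(Bin(n-1, p) = k) ≥ exp (L/100) / 33 → ∞`.
-/

open Real

theorem div_pow_le_choose_mul_pow {n k : ℕ} (hkn : k < n) {p : ℝ} (hp : 0 ≤ p) :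
    (((n : ℝ) - k) * p / k) ^ k ≤ ((n - 1).choose k : ℝ) * p ^ k := by
  have hchoose : ((n : ℝ) - k) ^ k / k.factorial ≤ ((n - 1).choose k : ℝ) := by
    have h := Nat.pow_le_choose (α := ℝ) k (n - 1)
    rwa [show n - 1 + 1 - k = n - k by omega, Nat.cast_sub hkn.le] at h
  have hnk : (0 : ℝ) ≤ (n : ℝ) - k := by
    have : (k : ℝ) < n := by exact_mod_cast hkn
    linarith
  calc (((n : ℝ) - k) * p / k) ^ k = ((n : ℝ) - k) ^ k * p ^ k / (k : ℝ) ^ k := by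
        rw [div_pow, mul_pow]
    _ ≤ ((n : ℝ) - k) ^ k * p ^ k / k.factorial := by
        gcongr
        exact_mod_cast k.factorial_le_pow
    _ = ((n : ℝ) - k) ^ k / k.factorial * p ^ k := by ring
    _ ≤ ((n - 1).choose k : ℝ) * p ^ k := by gcongr

theorem exp_neg_mul_div_le_one_sub_pow (m : ℕ) {p : ℝ} (hp : p < 1) :
    exp (-(m * (p / (1 - p)))) ≤ (1 - p) ^ m := by
  have hq : 0 < 1 - p := by linarith
  have hlog : -(p / (1 - p)) ≤ log (1 - p) := by
    have h := one_sub_inv_le_log_of_pos hq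
    have : 1 - (1 - p)⁻¹ = -(p / (1 - p)) := by field_simp; ring
    rwa [this] at h
  calc exp (-(m * (p / (1 - p)))) = exp (-(p / (1 - p))) ^ m := by
        rw [← exp_nat_mul]; ring_nf
    _ ≤ exp (log (1 - p)) ^ m := by gcongr
    _ = (1 - p) ^ m := by rw [exp_log hq]

theorem div_pow_mul_exp_le_choose_mul_pow_mul_one_sub_pow {n k : ℕ} (hkn : k < n) {p : ℝ}
    (hp0 : 0 ≤ p) (hp1 : p < 1) :
    (((n : ℝ) - k) * p / k) ^ k * exp (-(((n : ℝ) - k) * p / (1 - p))) ≤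
      ((n - 1).choose k : ℝ) * p ^ k * (1 - p) ^ (n - 1 - k) := by
  have htail : exp (-(((n : ℝ) - k) * p / (1 - p))) ≤ (1 - p) ^ (n - 1 - k) := by
    refine le_trans ?_ (exp_neg_mul_div_le_one_sub_pow (n - 1 - k) hp1)
    have hm : ((n - 1 - k : ℕ) : ℝ) ≤ (n : ℝ) - k := by
      rw [← Nat.cast_sub hkn.le]; exact_mod_cast (by omega : n - 1 - k ≤ n - k)
    have hq : 0 < 1 - p := by linarith
    rw [exp_le_exp, neg_le_neg_iff, mul_div_assoc]
    gcongr
  gcongr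
  exact div_pow_le_choose_mul_pow hkn hp0

theorem exp_div_le_exp_mul_pow_mul_exp {L p : ℝ} {k : ℕ} (hL : 0 ≤ L) (hk : L / 30 < k + 1)
    (hp : p ≤ 1 / 2000) :
    exp (L / 100) / 33 ≤ exp L * 33 ^ k * exp (-(1.1 * L / (1 - p))) := by
  have hlog33 : 3.46 < log 33 := by
    have h32 : log 32 = 5 * log 2 := by
      rw [show (32 : ℝ) = 2 ^ 5 by norm_num, log_pow]; norm_num
    have := log_two_gt_d9
    have : log 32 < log 33 := log_lt_log (by norm_num) (by norm_num)
    linarith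
  have hpow : (33 : ℝ) ^ k = exp (k * log 33) := by rw [exp_nat_mul, exp_log (by norm_num)]
  have hdiv : exp (L / 100) / 33 = exp (L / 100 - log 33) := by
    rw [exp_sub, exp_log (by norm_num)]
  have hk' : (L / 30 - 1) * log 33 ≤ k * log 33 := by gcongr; linarith
  have htail : 1.1 * L / (1 - p) ≤ 1.101 * L := by
    rw [div_le_iff₀ (by linarith)]; nlinarith
  rw [hpow, hdiv, ← exp_add, ← exp_add, exp_le_exp]
  nlinarith [mul_le_mul_of_nonneg_left hlog33.le hL]

theorem exp_div_le_binom_point_prob {n : ℕ} (hn : 0 < n) (hlog : 3000 * log n ≤ n) :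
    exp (log n / 100) / 33 ≤
      (n : ℝ) * ((n - 1).choose ⌊log n / 30⌋₊ : ℝ) *
        (1.1 * log n / ((n : ℝ) - ⌊log n / 30⌋₊)) ^ ⌊log n / 30⌋₊ *
        (1 - 1.1 * log n / ((n : ℝ) - ⌊log n / 30⌋₊)) ^ (n - 1 - ⌊log n / 30⌋₊) := by
  set L := log n
  set k := ⌊L / 30⌋₊
  set p := 1.1 * L / ((n : ℝ) - k)
  have hL : 0 ≤ L := log_natCast_nonneg n
  have hnR : (0 : ℝ) < n := by exact_mod_cast hn
  have hkL : (k : ℝ) ≤ L / 30 := Nat.floor_le (by positivity)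
  have hknR : (k : ℝ) < n := by linarith
  have hkn : k < n := by exact_mod_cast hknR
  have hnk : (0 : ℝ) < n - k := by linarith
  have hmean : ((n : ℝ) - k) * p = 1.1 * L := mul_div_cancel₀ _ hnk.ne'
  have hp0 : 0 ≤ p := by positivity
  have hp : p ≤ 1 / 2000 := by rw [div_le_iff₀ hnk]; linarith
  have h33 : (33 : ℝ) ^ k ≤ (1.1 * L / k) ^ k := by
    rcases k.eq_zero_or_pos with hk0 | hk0
    · simp [hk0]
    · have : (0 : ℝ) < k := by exact_mod_cast hk0
      gcongr
      rw [le_div_iff₀ this]; linarith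
  calc exp (L / 100) / 33 ≤ exp L * 33 ^ k * exp (-(1.1 * L / (1 - p))) :=
        exp_div_le_exp_mul_pow_mul_exp hL (Nat.lt_floor_add_one _) hp
    _ ≤ n * ((((n : ℝ) - k) * p / k) ^ k * exp (-(((n : ℝ) - k) * p / (1 - p)))) := by
        rw [exp_log hnR, hmean, mul_assoc]
        gcongr _ * (?_ * _)
    _ ≤ n * (((n - 1).choose k : ℝ) * p ^ k * (1 - p) ^ (n - 1 - k)) := by
        gcongr n * ?_
        exact div_pow_mul_exp_le_choose_mul_pow_mul_one_sub_pow hkn hp0 (by linarith)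
    _ = _ := by ring

theorem binom_point_prob_omega :
    Filter.Tendsto
      (fun n : ℕ =>
        (n : ℝ) * ((n - 1).choose ⌊Real.log n / 30⌋₊ : ℝ) *
          (1.1 * Real.log n / ((n : ℝ) - (⌊Real.log n / 30⌋₊ : ℝ))) ^ ⌊Real.log n / 30⌋₊ *
          (1 - 1.1 * Real.log n / ((n : ℝ) - (⌊Real.log n / 30⌋₊ : ℝ))) ^ (n - 1 - ⌊Real.log n / 30⌋₊))
      Filter.atTop Filter.atTop := by
  have hn : Tendsto (fun n : ℕ => (n : ℝ)) atTop atTop := tendsto_natCast_atTop_atTop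
  have hlog : Tendsto (fun n : ℕ => log n) atTop atTop := tendsto_log_atTop.comp hn
  have hsmall : ∀ᶠ n : ℕ in atTop, 3000 * log n ≤ n := by
    filter_upwards [hn.eventually (isLittleO_log_id_atTop.bound (c := 1 / 3000) (by norm_num)),
      eventually_ge_atTop 1] with n hbound hn1
    have hn1' : (1 : ℝ) ≤ n := by exact_mod_cast hn1
    rw [norm_of_nonneg (log_nonneg hn1'), id, norm_of_nonneg (by linarith)] at hbound
    linarith
  refine tendsto_atTop_mono' _ ?_
    ((tendsto_exp_atTop.comp (hlog.atTop_div_const (by norm_num : (0 : ℝ) < 100))).atTop_div_const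
      (by norm_num : (0 : ℝ) < 33))
  filter_upwards [hsmall, eventually_gt_atTop 0] with n hsmall hn0
  exact exp_div_le_binom_point_prob hn0 hsmall
end

section
/- If (log n + ω(1))/n ≤ p ≤ (1.1 log n)/n, then asymptotically almost surely the random graph G(n,p) has minimum degree at most log n / 30. -/
open scoped Classical
open Filter

/-!
Let `X` count the vertices of degree at most `K = ⌊log n / 30⌋`, and view `G(n,p)` as the
`p`-random subset of the edges of `Kₙ`. For `u ≠ v`, the event `deg u ≤ K ∧ deg v ≤ K` implies
the same bounds for the two degrees with the edge `uv` deleted; these are independent, each of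
probability `q' ≤ q / (1 - p)`, where `q = ℙ(deg v ≤ K)`. Hence `𝔼[X²] ≤ 𝔼X + (𝔼X / (1 - p))²`,
and Cauchy–Schwarz (the second moment method) gives `ℙ(X ≠ 0) ≥ 1 / (1 / 𝔼X + 1 / (1 - p)²)`.
Finally `𝔼X = nq ≥ n · C(n-1, K) pᴷ (1-p)ⁿ ≥ n · 30ᴷ · e^{-np-2} ≥ exp (log n / 150 - 5.2) → ∞`,
where `np ≤ 1.1 log n` is beaten because `(log 30) / 30 > 3.2 / 30 > 0.1`; together with `p → 0`
this shows `ℙ(X ≠ 0) → 1`.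
-/

open Finset SimpleGraph Real Topology

section RandomSubset

variable {α : Type*}

noncomputable def binomialExpect (p : ℝ) (m : ℕ) (φ : ℕ → ℝ) : ℝ :=
  ∑ j ∈ range (m + 1), m.choose j * p ^ j * (1 - p) ^ (m - j) * φ j

/-- The expectation of `F A` for the random subset `A ⊆ U` containing each element
independently with probability `p`. -/
noncomputable def randomSubsetExpect (p : ℝ) (U : Finset α) (F : Finset α → ℝ) : ℝ :=
  ∑ A ∈ U.powerset, p ^ #A * (1 - p) ^ (#U - #A) * F A

theorem binomialExpect_one (p : ℝ) (m : ℕ) : binomialExpect p m 1 = 1 := by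
  calc binomialExpect p m 1 = (p + (1 - p)) ^ m := by
        rw [add_pow]; exact sum_congr rfl fun j _ => by simp only [Pi.one_apply]; ring
    _ = 1 := by rw [add_sub_cancel, one_pow]

theorem randomSubsetExpect_card (p : ℝ) (U : Finset α) (φ : ℕ → ℝ) :
    randomSubsetExpect p U (fun A => φ #A) = binomialExpect p #U φ := by
  rw [randomSubsetExpect, sum_powerset_apply_card fun j => p ^ j * (1 - p) ^ (#U - j) * φ j]
  exact sum_congr rfl fun j _ => by rw [nsmul_eq_mul]; ring

theorem randomSubsetExpect_one (p : ℝ) (U : Finset α) : randomSubsetExpect p U 1 = 1 :=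
  (randomSubsetExpect_card p U 1).trans (binomialExpect_one p #U)

theorem randomSubsetExpect_sum {ι : Type*} (p : ℝ) (U : Finset α) (s : Finset ι)
    (F : ι → Finset α → ℝ) :
    randomSubsetExpect p U (fun A => ∑ i ∈ s, F i A) = ∑ i ∈ s, randomSubsetExpect p U (F i) := by
  simp only [randomSubsetExpect, mul_sum]
  exact sum_comm

variable {p : ℝ}

theorem randomSubsetExpect_nonneg (hp0 : 0 ≤ p) (hp1 : p ≤ 1) {U : Finset α}
    {F : Finset α → ℝ} (h : ∀ A ⊆ U, 0 ≤ F A) : 0 ≤ randomSubsetExpect p U F := by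
  have := sub_nonneg.2 hp1
  exact sum_nonneg fun A hA => mul_nonneg (by positivity) (h A (mem_powerset.1 hA))

theorem randomSubsetExpect_mono (hp0 : 0 ≤ p) (hp1 : p ≤ 1) {U : Finset α}
    {F G : Finset α → ℝ} (h : ∀ A ⊆ U, F A ≤ G A) :
    randomSubsetExpect p U F ≤ randomSubsetExpect p U G := by
  have := sub_nonneg.2 hp1
  exact sum_le_sum fun A hA => mul_le_mul_of_nonneg_left (h A (mem_powerset.1 hA)) (by positivity)

theorem randomSubsetExpect_sq_le (hp0 : 0 ≤ p) (hp1 : p ≤ 1) (U : Finset α)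
    (X : Finset α → ℝ) :
    randomSubsetExpect p U X ^ 2 ≤
      randomSubsetExpect p U (fun A => if X A = 0 then 0 else 1) *
        randomSubsetExpect p U (fun A => X A ^ 2) := by
  have := sub_nonneg.2 hp1
  refine sum_sq_le_sum_mul_sum_of_sq_le_mul _ (fun A _ => ?_) (fun A _ => by positivity)
    fun A _ => le_of_eq ?_
  · dsimp only
    split_ifs <;> positivity
  · dsimp only
    split_ifs with hX
    · rw [hX]; ring
    · ring

theorem binomialExpect_nonneg (hp0 : 0 ≤ p) (hp1 : p ≤ 1) (m : ℕ) {φ : ℕ → ℝ}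
    (hφ : ∀ j, 0 ≤ φ j) : 0 ≤ binomialExpect p m φ := by
  have := sub_nonneg.2 hp1
  exact sum_nonneg fun j _ => mul_nonneg (by positivity) (hφ j)

theorem choose_mul_pow_mul_le_binomialExpect (hp0 : 0 ≤ p) (hp1 : p ≤ 1) {j m : ℕ}
    (hj : j ≤ m) {φ : ℕ → ℝ} (hφ : ∀ j, 0 ≤ φ j) :
    m.choose j * p ^ j * (1 - p) ^ (m - j) * φ j ≤ binomialExpect p m φ := by
  have := sub_nonneg.2 hp1
  exact single_le_sum (f := fun j => m.choose j * p ^ j * (1 - p) ^ (m - j) * φ j)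
    (fun i _ => mul_nonneg (by positivity) (hφ i)) (mem_range.2 (Nat.lt_succ_of_le hj))

theorem one_sub_mul_binomialExpect_le_succ (hp0 : 0 ≤ p) (hp1 : p ≤ 1) (m : ℕ) {φ : ℕ → ℝ}
    (hφ : ∀ j, 0 ≤ φ j) : (1 - p) * binomialExpect p m φ ≤ binomialExpect p (m + 1) φ := by
  have := sub_nonneg.2 hp1
  rw [binomialExpect, binomialExpect, mul_sum]
  calc ∑ j ∈ range (m + 1), (1 - p) * (m.choose j * p ^ j * (1 - p) ^ (m - j) * φ j)
      ≤ ∑ j ∈ range (m + 1), (m + 1).choose j * p ^ j * (1 - p) ^ (m + 1 - j) * φ j := by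
        refine sum_le_sum fun j hj => ?_
        have hjm : m + 1 - j = m - j + 1 := by have := mem_range.1 hj; omega
        have hchoose : (m.choose j : ℝ) ≤ (m + 1).choose j :=
          mod_cast Nat.choose_le_choose j m.le_succ
        have hw : 0 ≤ p ^ j * (1 - p) ^ (m - j) * (1 - p) * φ j :=
          mul_nonneg (by positivity) (hφ j)
        rw [hjm, pow_succ]
        linarith [mul_le_mul_of_nonneg_right hchoose hw]
    _ ≤ ∑ j ∈ range (m + 1 + 1), (m + 1).choose j * p ^ j * (1 - p) ^ (m + 1 - j) * φ j :=
        sum_le_sum_of_subset_of_nonneg (range_subset_range.2 m.succ.le_succ)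
          fun j _ _ => mul_nonneg (by positivity) (hφ j)

variable [DecidableEq α]

theorem sum_powerset_union_inter_mul {β : Type*} [CommSemiring β] {S T : Finset α}
    (h : Disjoint S T) (f g : Finset α → β) :
    ∑ A ∈ (S ∪ T).powerset, f (A ∩ S) * g (A ∩ T) =
      (∑ B ∈ S.powerset, f B) * ∑ C ∈ T.powerset, g C := by
  rw [sum_mul_sum, ← sum_product']
  refine sum_nbij' (fun A => (A ∩ S, A ∩ T)) (fun P => P.1 ∪ P.2) ?_ ?_ ?_ ?_ fun _ _ => rfl
  · simp
  · simp only [mem_product, mem_powerset, and_imp, Prod.forall]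
    exact fun B C hB hC => union_subset_union hB hC
  · intro A hA
    rw [mem_powerset] at hA
    exact (inter_union_distrib_left A S T).symm.trans (inter_eq_left.2 hA)
  · simp only [mem_product, mem_powerset, and_imp, Prod.forall, Prod.mk.injEq]
    intro B C hB hC
    rw [union_inter_distrib_right, union_inter_distrib_right, inter_eq_left.2 hB,
      inter_eq_left.2 hC, disjoint_iff_inter_eq_empty.1 (h.symm.mono_left hC),
      disjoint_iff_inter_eq_empty.1 (h.mono_left hB), union_empty, empty_union]
    exact ⟨rfl, rfl⟩

theorem randomSubsetExpect_union_mul {S T : Finset α} (h : Disjoint S T)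
    (F G : Finset α → ℝ) :
    randomSubsetExpect p (S ∪ T) (fun A => F (A ∩ S) * G (A ∩ T)) =
      randomSubsetExpect p S F * randomSubsetExpect p T G := by
  rw [randomSubsetExpect, randomSubsetExpect, randomSubsetExpect,
    ← sum_powerset_union_inter_mul h]
  refine sum_congr rfl fun A hA => ?_
  rw [mem_powerset] at hA
  have hcard : #A = #(A ∩ S) + #(A ∩ T) := by
    rw [← card_union_of_disjoint (h.mono inter_subset_right inter_subset_right),
      ← inter_union_distrib_left, inter_eq_left.2 hA]
  have hS : #(A ∩ S) ≤ #S := card_le_card inter_subset_right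
  have hT : #(A ∩ T) ≤ #T := card_le_card inter_subset_right
  have hcard_compl : #(S ∪ T) - #A = (#S - #(A ∩ S)) + (#T - #(A ∩ T)) := by
    rw [card_union_of_disjoint h]; omega
  rw [hcard_compl, hcard, pow_add, pow_add]
  ring

theorem randomSubsetExpect_inter {T U : Finset α} (h : T ⊆ U) (F : Finset α → ℝ) :
    randomSubsetExpect p U (fun A => F (A ∩ T)) = randomSubsetExpect p T F := by
  have := randomSubsetExpect_union_mul (p := p) (S := T) (T := U \ T) disjoint_sdiff F 1
  rw [union_sdiff_of_subset h, randomSubsetExpect_one, mul_one] at this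
  simpa only [Pi.one_apply, mul_one] using this

theorem randomSubsetExpect_card_inter {T U : Finset α} (h : T ⊆ U) (φ : ℕ → ℝ) :
    randomSubsetExpect p U (fun A => φ #(A ∩ T)) = binomialExpect p #T φ := by
  rw [randomSubsetExpect_inter h (fun B => φ #B), randomSubsetExpect_card]

theorem randomSubsetExpect_card_inter_mul {T₁ T₂ U : Finset α} (h₁ : T₁ ⊆ U) (h₂ : T₂ ⊆ U)
    (h : Disjoint T₁ T₂) (φ ψ : ℕ → ℝ) :
    randomSubsetExpect p U (fun A => φ #(A ∩ T₁) * ψ #(A ∩ T₂)) =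
      binomialExpect p #T₁ φ * binomialExpect p #T₂ ψ := by
  have h_inter := randomSubsetExpect_inter (p := p) (union_subset h₁ h₂)
    fun B => φ #(B ∩ T₁) * ψ #(B ∩ T₂)
  simp only [inter_assoc, union_inter_cancel_left, union_inter_cancel_right] at h_inter
  rw [h_inter, randomSubsetExpect_union_mul h (fun B => φ #B) (fun B => ψ #B),
    randomSubsetExpect_card, randomSubsetExpect_card]

end RandomSubset

section CompleteGraph

variable {V : Type*} [Fintype V] [DecidableEq V]

theorem card_incidenceFinset_top (v : V) :
    #((⊤ : SimpleGraph V).incidenceFinset v) = Fintype.card V - 1 := by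
  rw [card_incidenceFinset_eq_degree, ← complete_graph_degree v]

theorem incidenceFinset_top_inter {u v : V} (h : u ≠ v) :
    (⊤ : SimpleGraph V).incidenceFinset u ∩ (⊤ : SimpleGraph V).incidenceFinset v =
      {s(u, v)} := by
  rw [← coe_inj, coe_inter, coe_incidenceFinset, coe_incidenceFinset, coe_singleton]
  exact incidenceSet_inter_incidenceSet_of_adj _ h

theorem card_erase_incidenceFinset_top {u v : V} (h : u ≠ v) :
    #(((⊤ : SimpleGraph V).incidenceFinset u).erase s(u, v)) = Fintype.card V - 2 := by
  have he : s(u, v) ∈ (⊤ : SimpleGraph V).incidenceFinset u :=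
    (mem_inter.1 (incidenceFinset_top_inter h ▸ mem_singleton_self _)).1
  rw [card_erase_of_mem he, card_incidenceFinset_top, Nat.sub_sub]

theorem disjoint_erase_incidenceFinset_top {u v : V} (h : u ≠ v) :
    Disjoint (((⊤ : SimpleGraph V).incidenceFinset u).erase s(u, v))
      (((⊤ : SimpleGraph V).incidenceFinset v).erase s(u, v)) := by
  rw [disjoint_iff_inter_eq_empty, erase_inter, inter_erase, incidenceFinset_top_inter h]
  simp

theorem degree_fromEdgeSet {A : Finset (Sym2 V)} (hA : A ⊆ (⊤ : SimpleGraph V).edgeFinset)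
    (v : V) :
    (fromEdgeSet (A : Set (Sym2 V))).degree v = #(A ∩ (⊤ : SimpleGraph V).incidenceFinset v) := by
  rw [← card_incidenceFinset_eq_degree]
  congr 1
  ext e
  have hdiag : e ∈ A → ¬e.IsDiag := fun he => by simpa using hA he
  simp only [mem_inter, mem_incidenceFinset, incidenceSet, edgeSet_fromEdgeSet, edgeSet_top,
    Set.mem_ofPred_eq, Set.mem_sdiff, mem_coe, Set.mem_compl_iff, Sym2.mem_diagSet]
  tauto

end CompleteGraph

section GrProb

theorem grProb_eq_randomSubsetExpect (n : ℕ) (p : ℝ) (Q : SimpleGraph (Fin n) → Prop) :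
    grProb n p Q = randomSubsetExpect p (⊤ : SimpleGraph (Fin n)).edgeFinset
      (fun A => if Q (fromEdgeSet A) then 1 else 0) := by
  have hU : #(⊤ : SimpleGraph (Fin n)).edgeFinset = n.choose 2 := by
    simpa using card_edgeFinset_top_eq_card_choose_two (V := Fin n)
  unfold grProb randomSubsetExpect
  refine sum_nbij' (fun G => G.edgeFinset) (fun A => fromEdgeSet A) ?_ ?_ ?_ ?_ ?_
  · exact fun G _ => mem_powerset.2 (edgeFinset_subset_edgeFinset.2 le_top)
  · simp
  · simp
  · intro A hA
    ext e
    have hdiag : e ∈ A → ¬e.IsDiag := fun he => by simpa using mem_powerset.1 hA he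
    simp only [mem_edgeFinset, edgeSet_fromEdgeSet, Set.mem_sdiff, mem_coe, Sym2.mem_diagSet]
    tauto
  · intro G _
    simp only [coe_edgeFinset, fromEdgeSet_edgeSet, hU, edgeCount]
    split_ifs <;> simp

variable {n : ℕ} {p : ℝ}

theorem grProb_nonneg (hp0 : 0 ≤ p) (hp1 : p ≤ 1) (Q : SimpleGraph (Fin n) → Prop) :
    0 ≤ grProb n p Q := by
  rw [grProb_eq_randomSubsetExpect]
  exact randomSubsetExpect_nonneg hp0 hp1 fun A _ => by split_ifs <;> norm_num

theorem grProb_le_one (hp0 : 0 ≤ p) (hp1 : p ≤ 1) (Q : SimpleGraph (Fin n) → Prop) :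
    grProb n p Q ≤ 1 := by
  rw [grProb_eq_randomSubsetExpect]
  refine (randomSubsetExpect_mono (G := 1) hp0 hp1 fun A _ => ?_).trans_eq
    (randomSubsetExpect_one p _)
  split_ifs <;> norm_num

end GrProb

section LowDegreeVertices

def leIndicator (K j : ℕ) : ℝ := if j ≤ K then 1 else 0

theorem leIndicator_nonneg (K j : ℕ) : 0 ≤ leIndicator K j := by
  unfold leIndicator; split_ifs <;> norm_num

theorem leIndicator_mul_self (K j : ℕ) : leIndicator K j * leIndicator K j = leIndicator K j := by
  unfold leIndicator; split_ifs <;> norm_num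

theorem leIndicator_antitone (K : ℕ) : Antitone (leIndicator K) := by
  intro i j hij
  unfold leIndicator
  split_ifs with hj hi <;> norm_num
  omega

variable {V : Type*} [Fintype V] [DecidableEq V] {p : ℝ}

noncomputable def lowDegreeCount (K : ℕ) (A : Finset (Sym2 V)) : ℝ :=
  ∑ v, leIndicator K #(A ∩ (⊤ : SimpleGraph V).incidenceFinset v)

theorem randomSubsetExpect_lowDegreeCount (K : ℕ) :
    randomSubsetExpect p (⊤ : SimpleGraph V).edgeFinset (lowDegreeCount K) =
      Fintype.card V * binomialExpect p (Fintype.card V - 1) (leIndicator K) := by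
  unfold lowDegreeCount
  rw [randomSubsetExpect_sum]
  simp_rw [randomSubsetExpect_card_inter (incidenceFinset_subset _ _), card_incidenceFinset_top,
    sum_const, card_univ, nsmul_eq_mul]

theorem randomSubsetExpect_leIndicator_mul_le (hp0 : 0 ≤ p) (hp1 : p < 1) (K : ℕ) (u v : V) :
    randomSubsetExpect p (⊤ : SimpleGraph V).edgeFinset
        (fun A => leIndicator K #(A ∩ (⊤ : SimpleGraph V).incidenceFinset u) *
          leIndicator K #(A ∩ (⊤ : SimpleGraph V).incidenceFinset v)) ≤
      (if u = v then binomialExpect p (Fintype.card V - 1) (leIndicator K) else 0) +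
        (binomialExpect p (Fintype.card V - 1) (leIndicator K) / (1 - p)) ^ 2 := by
  rcases eq_or_ne u v with rfl | huv
  · simp_rw [leIndicator_mul_self, randomSubsetExpect_card_inter (incidenceFinset_subset _ _),
      card_incidenceFinset_top]
    exact le_add_of_nonneg_right (sq_nonneg _)
  rw [if_neg huv, zero_add]
  have hsub : ∀ w, ((⊤ : SimpleGraph V).incidenceFinset w).erase s(u, v) ⊆
      (⊤ : SimpleGraph V).edgeFinset :=
    fun w => (erase_subset _ _).trans (incidenceFinset_subset _ _)
  have hcard_v : #(((⊤ : SimpleGraph V).incidenceFinset v).erase s(u, v)) =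
      Fintype.card V - 2 := by
    rw [Sym2.eq_swap, card_erase_incidenceFinset_top huv.symm]
  have hbin : binomialExpect p (Fintype.card V - 2) (leIndicator K) ≤
      binomialExpect p (Fintype.card V - 1) (leIndicator K) / (1 - p) := by
    have : Fintype.card V - 2 + 1 = Fintype.card V - 1 := by
      have := Fintype.one_lt_card_iff.2 ⟨u, v, huv⟩; omega
    rw [le_div_iff₀ (sub_pos.2 hp1), mul_comm, ← this]
    exact one_sub_mul_binomialExpect_le_succ hp0 hp1.le _ (leIndicator_nonneg K)
  calc _ ≤ randomSubsetExpect p (⊤ : SimpleGraph V).edgeFinset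
        (fun A => leIndicator K #(A ∩ ((⊤ : SimpleGraph V).incidenceFinset u).erase s(u, v)) *
          leIndicator K #(A ∩ ((⊤ : SimpleGraph V).incidenceFinset v).erase s(u, v))) := by
        refine randomSubsetExpect_mono hp0 hp1.le fun A _ => mul_le_mul ?_ ?_
          (leIndicator_nonneg _ _) (leIndicator_nonneg _ _) <;>
        exact leIndicator_antitone K (card_le_card (inter_subset_inter_left (erase_subset _ _)))
    _ = binomialExpect p (Fintype.card V - 2) (leIndicator K) ^ 2 := by
        rw [randomSubsetExpect_card_inter_mul (hsub u) (hsub v)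
          (disjoint_erase_incidenceFinset_top huv), card_erase_incidenceFinset_top huv,
          hcard_v, sq]
    _ ≤ _ := pow_le_pow_left₀ (binomialExpect_nonneg hp0 hp1.le _ (leIndicator_nonneg K)) hbin 2

theorem randomSubsetExpect_lowDegreeCount_sq_le (hp0 : 0 ≤ p) (hp1 : p < 1) (K : ℕ) :
    randomSubsetExpect p (⊤ : SimpleGraph V).edgeFinset (fun A => lowDegreeCount K A ^ 2) ≤
      Fintype.card V * binomialExpect p (Fintype.card V - 1) (leIndicator K) +
        (Fintype.card V * binomialExpect p (Fintype.card V - 1) (leIndicator K) / (1 - p)) ^ 2 := by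
  simp only [lowDegreeCount, sq, sum_mul_sum]
  rw [randomSubsetExpect_sum]
  simp_rw [randomSubsetExpect_sum]
  refine (sum_le_sum fun u _ => sum_le_sum fun v _ =>
    randomSubsetExpect_leIndicator_mul_le hp0 hp1 K u v).trans_eq ?_
  simp only [sum_add_distrib, sum_ite_eq, mem_univ, if_true, sum_const, card_univ, nsmul_eq_mul]
  ring

end LowDegreeVertices

section MinDegree

variable {n : ℕ} {p L : ℝ}

theorem randomSubsetExpect_lowDegreeCount_ne_zero_le_grProb (hp0 : 0 ≤ p) (hp1 : p ≤ 1)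
    (hL : 0 ≤ L) :
    randomSubsetExpect p (⊤ : SimpleGraph (Fin n)).edgeFinset
        (fun A => if lowDegreeCount ⌊L⌋₊ A = 0 then 0 else 1) ≤
      grProb n p (fun G => (G.minDegree : ℝ) ≤ L) := by
  rw [grProb_eq_randomSubsetExpect]
  refine randomSubsetExpect_mono hp0 hp1 fun A hA => ?_
  split_ifs with hX hmin hmin <;> try norm_num
  obtain ⟨v, -, hv⟩ := exists_ne_zero_of_sum_ne_zero hX
  have hdeg : (fromEdgeSet (A : Set (Sym2 (Fin n)))).degree v ≤ ⌊L⌋₊ := by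
    rw [degree_fromEdgeSet hA]
    by_contra h
    exact hv (if_neg h)
  have hmin_le : ∀ G : SimpleGraph (Fin n), G.degree v ≤ ⌊L⌋₊ → (G.minDegree : ℝ) ≤ L :=
    fun G h => (Nat.cast_le.2 ((minDegree_le_degree G v).trans h)).trans (Nat.floor_le hL)
  exact hmin (hmin_le _ (by convert hdeg))

theorem inv_le_grProb_minDegree_le (hp0 : 0 ≤ p) (hp1 : p < 1) (hL : 0 ≤ L)
    (hμ : 0 < n * binomialExpect p (n - 1) (leIndicator ⌊L⌋₊)) :
    ((n * binomialExpect p (n - 1) (leIndicator ⌊L⌋₊))⁻¹ + ((1 - p)⁻¹) ^ 2)⁻¹ ≤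
      grProb n p (fun G => (G.minDegree : ℝ) ≤ L) := by
  set μ := n * binomialExpect p (n - 1) (leIndicator ⌊L⌋₊)
  set P := grProb n p (fun G => (G.minDegree : ℝ) ≤ L)
  have hsecond := randomSubsetExpect_sq_le hp0 hp1.le (⊤ : SimpleGraph (Fin n)).edgeFinset
    (lowDegreeCount ⌊L⌋₊)
  have hX2 := randomSubsetExpect_lowDegreeCount_sq_le (V := Fin n) hp0 hp1 ⌊L⌋₊
  rw [randomSubsetExpect_lowDegreeCount, Fintype.card_fin] at hsecond
  rw [Fintype.card_fin] at hX2
  have hX2_nonneg := randomSubsetExpect_nonneg hp0 hp1.le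
    (U := (⊤ : SimpleGraph (Fin n)).edgeFinset) fun A _ => sq_nonneg (lowDegreeCount ⌊L⌋₊ A)
  have key : μ ^ 2 * 1 ≤ μ ^ 2 * (P * (μ⁻¹ + ((1 - p)⁻¹) ^ 2)) := by
    calc μ ^ 2 * 1 ≤ P * (μ + (μ / (1 - p)) ^ 2) := by
          rw [mul_one]
          exact hsecond.trans <| mul_le_mul
            (randomSubsetExpect_lowDegreeCount_ne_zero_le_grProb hp0 hp1.le hL) hX2 hX2_nonneg
            (grProb_nonneg hp0 hp1.le _)
      _ = _ := by field_simp
  exact (inv_le_iff_one_le_mul₀ (add_pos_of_pos_of_nonneg (inv_pos.2 hμ) (sq_nonneg _))).2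
    (le_of_mul_le_mul_left key (pow_pos hμ 2))

end MinDegree

section Estimates

theorem natCast_pos_of_le_log {n : ℕ} {c : ℝ} (hc : 0 < c) (h : c ≤ log n) : 0 < (n : ℝ) :=
  Nat.cast_pos.2 (Nat.pos_of_ne_zero fun hn => by simp [hn] at h; linarith)

theorem exp_mul_le_thirty_pow (K : ℕ) : exp (3.2 * K) ≤ 30 ^ K := by
  have hexp : exp 3.2 ≤ 30 := by
    refine le_of_pow_le_pow_left₀ (by norm_num) (by norm_num) (n := 5) ?_
    calc exp 3.2 ^ 5 = exp 1 ^ 16 := by rw [← exp_nat_mul, ← exp_nat_mul]; norm_num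
      _ ≤ 2.7182818286 ^ 16 := by gcongr; exact exp_one_lt_d9.le
      _ ≤ 30 ^ 5 := by norm_num
  rw [mul_comm, exp_nat_mul]
  gcongr

theorem exp_neg_le_one_sub_pow {p : ℝ} (hp : p ≤ 1 / 2) (m : ℕ) :
    exp (-(m * (p + 2 * p ^ 2))) ≤ (1 - p) ^ m := by
  have h1p : 0 < 1 - p := by linarith
  have hlog : -(p + 2 * p ^ 2) ≤ log (1 - p) := by
    have h := one_sub_inv_le_log_of_pos h1p
    have : -(p + 2 * p ^ 2) ≤ 1 - (1 - p)⁻¹ := by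
      rw [le_sub_comm, inv_le_iff_one_le_mul₀ h1p]
      nlinarith
    linarith
  calc exp (-(m * (p + 2 * p ^ 2))) ≤ exp (m * log (1 - p)) := by
        rw [← mul_neg]
        gcongr
    _ = (1 - p) ^ m := by rw [exp_nat_mul, exp_log h1p]

theorem pow_le_choose_mul_pow {K m : ℕ} {c p : ℝ} (hc : 0 ≤ c) (hp : 0 ≤ p) (hK : 0 < K)
    (h : c * K ≤ ((m + 1 - K : ℕ) : ℝ) * p) : c ^ K ≤ m.choose K * p ^ K := by
  have hK' : (0 : ℝ) < K := by exact_mod_cast hK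
  calc c ^ K ≤ (((m + 1 - K : ℕ) : ℝ) * p / K) ^ K := by
        gcongr
        rwa [le_div_iff₀ hK']
    _ = (((m + 1 - K : ℕ) : ℝ) ^ K / K ^ K) * p ^ K := by rw [mul_div_right_comm, mul_pow, div_pow]
    _ ≤ m.choose K * p ^ K := by
        gcongr
        refine le_trans ?_ (Nat.pow_le_choose K m)
        gcongr
        exact_mod_cast K.factorial_le_pow

theorem exp_le_mul_binomialExpect_leIndicator {n : ℕ} {p : ℝ} (h30 : 30 ≤ log n)
    (hlow : log n + 1 ≤ n * p) (hhigh : n * p ≤ 1.1 * log n) (hsq : n * p ^ 2 ≤ 1) :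
    exp (log n / 150 - 5.2) ≤ n * binomialExpect p (n - 1) (leIndicator ⌊log n / 30⌋₊) := by
  have hn := natCast_pos_of_le_log (by norm_num) h30
  set L := log n
  set K := ⌊L / 30⌋₊
  have hp : 0 < p := (mul_pos_iff_of_pos_left hn).1 (by linarith)
  have hp_half : p ≤ 1 / 2 := by nlinarith
  have hKL : (K : ℝ) ≤ L / 30 := Nat.floor_le (by linarith)
  have hLK : L / 30 - 1 ≤ K := by linarith [Nat.lt_floor_add_one (L / 30)]
  have hK : 0 < K := Nat.le_floor (by norm_num; linarith)
  have hKn : K ≤ n - 1 := by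
    have : (K : ℝ) < n := by linarith [log_le_sub_one_of_pos hn]
    have : K < n := by exact_mod_cast this
    omega
  have hchoose : (30 : ℝ) ^ K ≤ (n - 1).choose K * p ^ K := by
    refine pow_le_choose_mul_pow (by norm_num) hp.le hK ?_
    rw [Nat.sub_add_cancel (by omega : 1 ≤ n), Nat.cast_sub (by omega)]
    nlinarith
  have hpow : exp (-(1.1 * L + 2)) ≤ (1 - p) ^ (n - 1 - K) := by
    calc exp (-(1.1 * L + 2)) ≤ exp (-(n * (p + 2 * p ^ 2))) := by
          gcongr
          linarith
      _ ≤ (1 - p) ^ n := exp_neg_le_one_sub_pow hp_half n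
      _ ≤ (1 - p) ^ (n - 1 - K) := pow_le_pow_of_le_one (by linarith) (by linarith) (by omega)
  have hterm := choose_mul_pow_mul_le_binomialExpect hp.le (by linarith) hKn (leIndicator_nonneg K)
  rw [leIndicator, if_pos le_rfl, mul_one] at hterm
  calc exp (L / 150 - 5.2) = exp L * exp (3.2 * (L / 30 - 1)) * exp (-(1.1 * L + 2)) := by
        rw [← exp_add, ← exp_add]; ring_nf
    _ ≤ n * (30 ^ K * (1 - p) ^ (n - 1 - K)) := by
        rw [exp_log hn, mul_assoc]
        gcongr
        exact (exp_le_exp.2 (by gcongr)).trans (exp_mul_le_thirty_pow K)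
    _ ≤ n * ((n - 1).choose K * p ^ K * (1 - p) ^ (n - 1 - K)) :=
        mul_le_mul_of_nonneg_left
          (mul_le_mul_of_nonneg_right hchoose (pow_nonneg (by linarith) _)) hn.le
    _ ≤ _ := by gcongr

end Estimates

section Asymptotics

variable {p : ℕ → ℝ}

theorem tendsto_log_pow_div_natCast (k : ℕ) :
    Tendsto (fun n : ℕ => log n ^ k / n) atTop (𝓝 0) := by
  have h := tendsto_pow_log_div_mul_add_atTop 1 0 k one_ne_zero
  simp only [one_mul, add_zero] at h
  exact h.comp tendsto_natCast_atTop_atTop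

theorem eventually_pos_of_tendsto_mul_sub_log
    (hlow : Tendsto (fun n : ℕ => n * p n - log n) atTop atTop) : ∀ᶠ n in atTop, 0 < p n := by
  filter_upwards [hlow.eventually_gt_atTop 0] with n hn
  exact pos_of_mul_pos_right (by linarith [log_natCast_nonneg n]) (Nat.cast_nonneg n)

theorem tendsto_zero_of_le_log_div (hpos : ∀ᶠ n in atTop, 0 < p n)
    (hhigh : ∀ᶠ n : ℕ in atTop, p n ≤ 1.1 * log n / n) : Tendsto p atTop (𝓝 0) := by
  have hbound : Tendsto (fun n : ℕ => 1.1 * (log n ^ 1 / n)) atTop (𝓝 0) := by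
    simpa using (tendsto_log_pow_div_natCast 1).const_mul 1.1
  refine tendsto_of_tendsto_of_tendsto_of_le_of_le' tendsto_const_nhds hbound
    (hpos.mono fun n hn => hn.le) (hhigh.mono fun n hn => ?_)
  rwa [pow_one, ← mul_div_assoc]

theorem eventually_log_mul_bounds (hlow : Tendsto (fun n : ℕ => n * p n - log n) atTop atTop)
    (hhigh : ∀ᶠ n : ℕ in atTop, p n ≤ 1.1 * log n / n) :
    ∀ᶠ n : ℕ in atTop, 30 ≤ log n ∧ log n + 1 ≤ n * p n ∧ n * p n ≤ 1.1 * log n ∧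
      n * p n ^ 2 ≤ 1 := by
  filter_upwards [(tendsto_log_atTop.comp tendsto_natCast_atTop_atTop).eventually_ge_atTop 30,
    hlow.eventually_ge_atTop 1, hhigh, (tendsto_log_pow_div_natCast 2).eventually_le_const
      (by norm_num : (0 : ℝ) < 1 / 2)] with n h30 hmul hp_le hlog_sq
  simp only [Function.comp_apply] at h30
  have hn := natCast_pos_of_le_log (by norm_num) h30
  have hmul_le : n * p n ≤ 1.1 * log n := by rwa [le_div_iff₀' hn] at hp_le
  refine ⟨h30, by linarith, hmul_le, ?_⟩
  rw [div_le_iff₀ hn] at hlog_sq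
  have : (n * p n) ^ 2 ≤ (1.1 * log n) ^ 2 := pow_le_pow_left₀ (by linarith) hmul_le 2
  nlinarith

end Asymptotics

theorem aas_minDegree_le_general (p : ℕ → ℝ)
    (hlow : Filter.Tendsto (fun n : ℕ => (n : ℝ) * p n - Real.log n) Filter.atTop Filter.atTop)
    (hhigh : ∀ᶠ n : ℕ in Filter.atTop, p n ≤ 1.1 * Real.log n / n) :
    Filter.Tendsto
      (fun n : ℕ => grProb n (p n) fun G => (G.minDegree : ℝ) ≤ Real.log n / 30)
      Filter.atTop (nhds 1) := by
  set μ : ℕ → ℝ := fun n => n * binomialExpect (p n) (n - 1) (leIndicator ⌊log n / 30⌋₊)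
  have hbounds := eventually_log_mul_bounds hlow hhigh
  have hpos := eventually_pos_of_tendsto_mul_sub_log hlow
  have hp := tendsto_zero_of_le_log_div hpos hhigh
  have hp_lt : ∀ᶠ n in atTop, p n < 1 := hp.eventually_lt_const one_pos
  have hμ : Tendsto μ atTop atTop := by
    refine tendsto_atTop_mono' atTop (hbounds.mono fun n ⟨h30, h₁, h₂, h₃⟩ =>
      exp_le_mul_binomialExpect_leIndicator h30 h₁ h₂ h₃) ?_
    exact tendsto_exp_atTop.comp <| tendsto_atTop_add_const_right _ _ <|
      (tendsto_log_atTop.comp tendsto_natCast_atTop_atTop).atTop_div_const (by norm_num)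
  have hlim : Tendsto (fun n => ((μ n)⁻¹ + ((1 - p n)⁻¹) ^ 2)⁻¹) atTop (𝓝 1) := by
    have h1p : Tendsto (fun n => 1 - p n) atTop (𝓝 1) := by
      simpa using (tendsto_const_nhds (x := (1 : ℝ))).sub hp
    simpa using (hμ.inv_tendsto_atTop.add ((h1p.inv₀ one_ne_zero).pow 2)).inv₀ (by norm_num)
  refine tendsto_of_tendsto_of_tendsto_of_le_of_le' hlim tendsto_const_nhds ?_ ?_
  · filter_upwards [hbounds, hpos, hp_lt, hμ.eventually_gt_atTop 0] with n hb hpos hp_lt hμn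
    exact inv_le_grProb_minDegree_le hpos.le hp_lt (by linarith [hb.1]) hμn
  · filter_upwards [hpos, hp_lt] with n hpos hp_lt
    exact grProb_le_one hpos.le hp_lt.le _

theorem aas_minDegree_le (p : ℕ → ℝ) (hp0 : ∀ n, 0 ≤ p n) (hp1 : ∀ n, p n ≤ 1)
    (hlow : Filter.Tendsto (fun n : ℕ => (n : ℝ) * p n - Real.log n) Filter.atTop Filter.atTop)
    (hhigh : ∀ᶠ n : ℕ in Filter.atTop, p n ≤ 1.1 * Real.log n / n) :
    Filter.Tendsto
      (fun n : ℕ => grProb n (p n) fun G => (G.minDegree : ℝ) ≤ Real.log n / 30)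
      Filter.atTop (nhds 1) :=
  aas_minDegree_le_general p hlow hhigh
end

section
/- Let G be a graph on n vertices with minimum degree δ, and suppose: (a) every vertex of degree > log n/6 in a set S₁ ⊆ V with |S₁| ≤ n/(log n)³ satisfies |E(S₁, S̄₁)| ≥ (log n/10)|S₁|; (b) no two vertices of degree ≤ log n/6 are adjacent or share a common neighbor; (c) δ ≤ log n/30. Then for every vertex set S with 1 ≤ |S| ≤ n/(log n)³, |E(S, S̄)| ≥ δ·|S|. -/
open scoped Classical
open Filter

/-
Split `S` into its small vertices `A` and its large vertices `B`. Since `A` is independent, every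
edge at a vertex of `A` leaves `S` or ends in `B`, and each vertex of `B` has at most one
neighbour in `A`; hence `e(S, S̄) = e(A, Ā) + e(B, B̄) - 2 e(A, B) ≥ δ|A| + (log n/10 - 2)|B|`,
and `log n/10 - 2 ≥ log n/30 ≥ δ` because `log n ≥ 30`.
-/

open Finset

namespace SimpleGraph

variable {V : Type*} (G : SimpleGraph V) {s t u A B : Finset V}

theorem card_interedges_eq_sum (s t : Finset V) :
    #(G.interedges s t) = ∑ v ∈ s, #{w ∈ t | G.Adj v w} := by
  rw [interedges_def, card_filter, sum_product]
  exact sum_congr rfl fun v _ => (card_filter _ _).symm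

theorem card_interedges_comm (s t : Finset V) :
    #(G.interedges s t) = #(G.interedges t s) :=
  have := G.symm
  Rel.card_interedges_comm s t

theorem card_interedges_union_left (hs : Disjoint s t) (u : Finset V) :
    #(G.interedges (s ∪ t) u) = #(G.interedges s u) + #(G.interedges t u) := by
  rw [← card_union_of_disjoint (G.interedges_disjoint_left hs u)]
  congr 1
  ext
  simp only [mem_interedges_iff, mem_union]
  tauto

theorem card_interedges_union_right (s : Finset V) (ht : Disjoint t u) :
    #(G.interedges s (t ∪ u)) = #(G.interedges s t) + #(G.interedges s u) := by
  rw [card_interedges_comm, card_interedges_union_left G ht, card_interedges_comm G t,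
    card_interedges_comm G u]

theorem card_interedges_le_card_right (hB : ∀ b ∈ B, #{a ∈ A | G.Adj b a} ≤ 1) :
    #(G.interedges A B) ≤ #B := by
  rw [card_interedges_comm, card_interedges_eq_sum]
  simpa using sum_le_sum hB

variable [Fintype V]

theorem crossCount_eq_card_interedges (s : Finset V) :
    crossCount G s = #(G.interedges s sᶜ) := rfl

theorem card_interedges_univ (s : Finset V) :
    #(G.interedges s univ) = ∑ v ∈ s, G.degree v := by
  simp only [card_interedges_eq_sum, ← card_neighborFinset_eq_degree, neighborFinset_eq_filter]

theorem crossCount_eq_sum_degree (hs : G.IsIndepSet s) :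
    crossCount G s = ∑ v ∈ s, G.degree v := by
  have hss : G.interedges s s = ∅ := by
    ext ⟨u, v⟩
    simp only [mk_mem_interedges_iff, Finset.notMem_empty, iff_false]
    rintro ⟨hu, hv, huv⟩
    exact hs hu hv huv.ne huv
  rw [← card_interedges_univ, ← union_compl s, card_interedges_union_right G s disjoint_compl_right,
    hss, card_empty, zero_add, crossCount_eq_card_interedges]

theorem crossCount_union_add_two_mul (h : Disjoint A B) :
    crossCount G (A ∪ B) + 2 * #(G.interedges A B) = crossCount G A + crossCount G B := by
  have hA : Aᶜ = B ∪ (A ∪ B)ᶜ := by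
    ext; simp only [mem_compl, mem_union]; have := Finset.disjoint_left.1 h; tauto
  have hB : Bᶜ = A ∪ (A ∪ B)ᶜ := by
    ext; simp only [mem_compl, mem_union]; have := Finset.disjoint_left.1 h; tauto
  simp only [crossCount_eq_card_interedges]
  rw [hA, hB, card_interedges_union_left G h,
    card_interedges_union_right G A (disjoint_compl_right.mono_left subset_union_right),
    card_interedges_union_right G B (disjoint_compl_right.mono_left subset_union_left),
    card_interedges_comm G B A]
  ring

theorem minDegree_mul_card_le_crossCount_union (h : Disjoint A B) (hA : G.IsIndepSet A)
    (hB : ∀ b ∈ B, #{a ∈ A | G.Adj b a} ≤ 1) (hBcross : (G.minDegree + 2) * #B ≤ crossCount G B) :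
    G.minDegree * #(A ∪ B) ≤ crossCount G (A ∪ B) := by
  have hunion := G.crossCount_union_add_two_mul h
  have hAB := G.card_interedges_le_card_right hB
  have hAcross : G.minDegree * #A ≤ crossCount G A := by
    rw [G.crossCount_eq_sum_degree hA, mul_comm, ← smul_eq_mul]
    exact card_nsmul_le_sum _ _ _ fun v _ => G.minDegree_le_degree v
  rw [card_union_of_disjoint h]
  nlinarith

end SimpleGraph

theorem expansion_all_small_sets_general {V : Type*} [Fintype V] (G : SimpleGraph V)
    (n : ℕ) (hbig : Real.exp 30 ≤ (n : ℝ))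
    (ha : ∀ S₁ : Finset V, S₁.Nonempty →
      (∀ v ∈ S₁, Real.log n / 6 < (G.degree v : ℝ)) →
      (S₁.card : ℝ) ≤ (n : ℝ) / (Real.log n) ^ 3 →
      Real.log n / 10 * S₁.card ≤ (crossCount G S₁ : ℝ))
    (hb : ∀ u v : V, u ≠ v → (G.degree u : ℝ) ≤ Real.log n / 6 →
      (G.degree v : ℝ) ≤ Real.log n / 6 →
      ¬ G.Adj u v ∧ ∀ w, ¬ (G.Adj u w ∧ G.Adj v w))
    (hc : (G.minDegree : ℝ) ≤ Real.log n / 30) :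
    ∀ S : Finset V, S.Nonempty → (S.card : ℝ) ≤ (n : ℝ) / (Real.log n) ^ 3 →
      G.minDegree * S.card ≤ crossCount G S := by
  intro S _ hS
  have hlog : 30 ≤ Real.log n := by
    simpa using Real.log_le_log (Real.exp_pos 30) hbig
  let small (v : V) : Prop := (G.degree v : ℝ) ≤ Real.log n / 6
  rw [← filter_union_filter_not_eq small S]
  refine G.minDegree_mul_card_le_crossCount_union (disjoint_filter_filter_not _ _ _) ?_ ?_ ?_
  · intro u hu v hv huv
    exact (hb u v huv (mem_filter.1 hu).2 (mem_filter.1 hv).2).1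
  · intro b _
    refine card_le_one.2 fun u hu v hv => by_contra fun huv => ?_
    simp only [mem_filter] at hu hv
    exact (hb u v huv hu.1.2 hv.1.2).2 b ⟨hu.2.symm, hv.2.symm⟩
  · obtain hB | hB := (S.filter fun v => ¬ small v).eq_empty_or_nonempty
    · simp [hB]
    have hcross := ha _ hB (fun v hv => not_le.1 (mem_filter.1 hv).2)
      (le_trans (mod_cast card_le_card (filter_subset _ S)) hS)
    have hδ : ((G.minDegree + 2 : ℕ) : ℝ) ≤ Real.log n / 10 := by push_cast; linarith
    exact_mod_cast (mul_le_mul_of_nonneg_right hδ (Nat.cast_nonneg _)).trans hcross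

theorem expansion_all_small_sets {V : Type*} [Fintype V] (G : SimpleGraph V)
    (n : ℕ) (hn : n = Fintype.card V) (hbig : Real.exp 30 ≤ (n : ℝ))
    (ha : ∀ S₁ : Finset V, S₁.Nonempty →
      (∀ v ∈ S₁, Real.log n / 6 < (G.degree v : ℝ)) →
      (S₁.card : ℝ) ≤ (n : ℝ) / (Real.log n) ^ 3 →
      Real.log n / 10 * S₁.card ≤ (crossCount G S₁ : ℝ))
    (hb : ∀ u v : V, u ≠ v → (G.degree u : ℝ) ≤ Real.log n / 6 →
      (G.degree v : ℝ) ≤ Real.log n / 6 →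
      ¬ G.Adj u v ∧ ∀ w, ¬ (G.Adj u w ∧ G.Adj v w))
    (hc : (G.minDegree : ℝ) ≤ Real.log n / 30) :
    ∀ S : Finset V, S.Nonempty → (S.card : ℝ) ≤ (n : ℝ) / (Real.log n) ^ 3 →
      G.minDegree * S.card ≤ crossCount G S :=
  expansion_all_small_sets_general G n hbig ha hb hc
end

section
/- Let G be a graph on n vertices with minimum degree δ such that every nonempty vertex set S with |S| ≤ n/2 satisfies |E(S, S̄)| ≥ δ·|S|. Then for every partition P = {V₁,…,V_t} of V in which the largest part has at least n/2 vertices, the number of crossing edges of P is at least δ·(t-1). -/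
open scoped Classical
open Filter

/-! Let `T` be a part with `|T| ≥ n/2`. The other `t - 1` parts are nonempty and lie in `Tᶜ`, so
`t - 1 ≤ |Tᶜ| ≤ n/2`, and the expansion hypothesis applied to `Tᶜ` gives `δ (t - 1) ≤ |E(Tᶜ, T)|`;
every edge leaving `T` crosses `P`. -/

namespace Finpartition

theorem card_parts_sub_one_le_card_sub_card {α : Type*} {s : Finset α} (P : Finpartition s)
    {T : Finset α} (hT : T ∈ P.parts) : P.parts.card - 1 ≤ s.card - T.card := by
  have hrest : ∑ p ∈ P.parts.erase T, p.card = s.card - T.card := by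
    rw [← P.sum_card_parts, ← Finset.sum_erase_add _ _ hT, Nat.add_sub_cancel]
  have hpos : ∀ p ∈ P.parts.erase T, 1 ≤ p.card := fun p hp =>
    Finset.card_pos.2 (P.nonempty_of_mem_parts (Finset.mem_of_mem_erase hp))
  calc P.parts.card - 1 = (P.parts.erase T).card := (Finset.card_erase_of_mem hT).symm
    _ ≤ ∑ p ∈ P.parts.erase T, p.card := by
      simpa using Finset.card_nsmul_le_sum _ _ 1 hpos
    _ = s.card - T.card := hrest

end Finpartition

section CrossingEdges

variable {V : Type*} [Fintype V] (G : SimpleGraph V)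

theorem crossCount_compl (S : Finset V) : crossCount G Sᶜ = crossCount G S := by
  unfold crossCount
  refine Finset.card_nbij' Prod.swap Prod.swap ?_ ?_ (fun _ _ => rfl) (fun _ _ => rfl) <;>
    · rintro ⟨a, b⟩ h
      simp only [Finset.coe_filter, Finset.mem_product, Finset.mem_compl, compl_compl,
        Set.mem_ofPred_eq] at h ⊢
      exact ⟨h.1.symm, h.2.symm⟩

theorem crossCount_le_partCross (P : Finpartition (Finset.univ : Finset V)) {T : Finset V}
    (hT : T ∈ P.parts) : crossCount G T ≤ partCross G P := by
  unfold crossCount partCross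
  refine Finset.card_le_card_of_injOn (fun e => s(e.1, e.2)) ?_ ?_
  · rintro ⟨a, b⟩ h
    simp only [Finset.coe_filter, Finset.mem_product, Finset.mem_compl, Set.mem_ofPred_eq] at h
    obtain ⟨⟨ha, hb⟩, hab⟩ := h
    simp only [Finset.coe_filter, SimpleGraph.mem_edgeFinset, SimpleGraph.mem_edgeSet,
      Set.mem_ofPred_eq, Sym2.mem_iff, forall_eq_or_imp, forall_eq]
    exact ⟨hab, fun t ht hboth => hb (P.eq_of_mem_parts ht hT hboth.1 ha ▸ hboth.2)⟩
  · rintro ⟨a, b⟩ h ⟨c, d⟩ h' heq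
    simp only [Finset.coe_filter, Finset.mem_product, Finset.mem_compl, Set.mem_ofPred_eq] at h h'
    rcases Sym2.eq_iff.1 heq with ⟨rfl, rfl⟩ | ⟨rfl, rfl⟩
    · rfl
    · exact absurd h.1.1 h'.1.2

end CrossingEdges

theorem partition_crossing_big_part {V : Type*} [Fintype V] (G : SimpleGraph V)
    (n : ℕ) (hn : n = Fintype.card V)
    (hS : ∀ S : Finset V, S.Nonempty → (S.card : ℝ) ≤ (n : ℝ) / 2 →
      G.minDegree * S.card ≤ crossCount G S)
    (P : Finpartition (Finset.univ : Finset V))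
    (hbig : ∃ t ∈ P.parts, (n : ℝ) / 2 ≤ (t.card : ℝ)) :
    G.minDegree * (P.parts.card - 1) ≤ partCross G P := by
  obtain ⟨T, hT, hTbig⟩ := hbig
  have hparts : P.parts.card - 1 ≤ Tᶜ.card := by
    simpa [Finset.card_compl] using P.card_parts_sub_one_le_card_sub_card hT
  rcases Tᶜ.eq_empty_or_nonempty with hempty | hne
  · simp_all
  have hhalf : (Tᶜ.card : ℝ) ≤ (n : ℝ) / 2 := by
    have hTn : T.card ≤ n := hn ▸ Finset.card_le_univ T
    rw [Finset.card_compl, ← hn, Nat.cast_sub hTn]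
    linarith
  calc G.minDegree * (P.parts.card - 1) ≤ G.minDegree * Tᶜ.card := Nat.mul_le_mul_left _ hparts
    _ ≤ crossCount G Tᶜ := hS Tᶜ hne hhalf
    _ = crossCount G T := crossCount_compl G T
    _ ≤ partCross G P := crossCount_le_partCross G P hT
end

section
/- For p = p(n) ≥ (51 log n)/n, asymptotically almost surely the random graph G ~ G(n,p) satisfies σ(G) < δ(G), i.e., its spanning tree packing number is strictly less than its minimum degree. -/
open scoped Classical
open Filter

/-!
Every spanning tree has `n - 1` edges, so `σ(G) (n - 1) ≤ |E(G)|` and it suffices that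
`|E(G)| < (n - 1) δ(G)`. In `G(n,p)` the number of edges concentrates around
`(n choose 2) p ≈ n² p / 2`, whereas every degree concentrates around `(n - 1) p`. By Chernoff
bounds, `|E(G)| ≥ (6/5) (n choose 2) p` has probability `exp (-Ω(n² p))`, and a given vertex has
degree at most `(13/20) (n - 1) p` with probability `exp (-(49/1600) (n - 1) p) ≤ n ^ (-49/32)`
because `(n - 1) p ≥ 50 log n`; a union bound over the `n` vertices finishes the proof.
-/

open Finset

section SpanningTreePacking

variable {V : Type*} [Fintype V] {G : SimpleGraph V}

lemma HasDisjSpanningTrees.mul_le_edgeCount {k : ℕ} (hk : HasDisjSpanningTrees G k) :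
    k * (Fintype.card V - 1) ≤ edgeCount G := by
  obtain ⟨f, hle, htree, hdisj⟩ := hk
  have hcard : ∀ i, #(f i).edgeFinset = Fintype.card V - 1 := fun i => by
    have := (htree i).card_edgeFinset
    omega
  have hdisjF :
      ((univ : Finset (Fin k)) : Set (Fin k)).PairwiseDisjoint fun i => (f i).edgeFinset :=
    fun i _ j _ hij => by simpa [← Finset.disjoint_coe] using hdisj i j hij
  calc k * (Fintype.card V - 1) = ∑ i, #(f i).edgeFinset := by simp [hcard]
    _ = #(univ.biUnion fun i => (f i).edgeFinset) := (card_biUnion hdisjF).symm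
    _ ≤ edgeCount G :=
      card_le_card (biUnion_subset.2 fun i _ => SimpleGraph.edgeFinset_mono (hle i))

/-- On at most one vertex the packing set may be unbounded (so `stp G = 0`), but then the factor
`Fintype.card V - 1` vanishes anyway. -/
lemma stp_mul_le_edgeCount (G : SimpleGraph V) : stp G * (Fintype.card V - 1) ≤ edgeCount G := by
  rcases Nat.lt_or_ge (Fintype.card V) 2 with hV | hV
  · simp [Nat.sub_eq_zero_of_le (Nat.le_of_lt_succ hV)]
  have hzero : HasDisjSpanningTrees G 0 :=
    ⟨Fin.elim0, fun i => i.elim0, fun i => i.elim0, fun i => i.elim0⟩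
  have hbdd : BddAbove {k | HasDisjSpanningTrees G k} := ⟨edgeCount G, fun k hk =>
    (Nat.le_mul_of_pos_right k (by omega)).trans hk.mul_le_edgeCount⟩
  exact (Nat.sSup_mem ⟨0, hzero⟩ hbdd).mul_le_edgeCount

lemma stp_lt_minDegree_of_edgeCount_lt [DecidableRel G.Adj]
    (h : edgeCount G < (Fintype.card V - 1) * G.minDegree) : stp G < G.minDegree :=
  Nat.lt_of_mul_lt_mul_left <| by
    rw [mul_comm]
    exact (stp_mul_le_edgeCount G).trans_lt h

end SpanningTreePacking

namespace ErdosRenyi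

variable {n : ℕ} {p : ℝ}

/-- `(6/5) (n choose 2) p = (3/5) n (n - 1) p` is at most `(n - 1) · (13/20) (n - 1) p` once
`n ≥ 13`. -/
lemma stp_lt_minDegree_of_bounds (hp0 : 0 ≤ p) (hn : 13 ≤ n) (G : SimpleGraph (Fin n))
    (hE : (edgeCount G : ℝ) < 6 / 5 * n.choose 2 * p)
    (hδ : ∀ v, 13 / 20 * (n - 1 : ℕ) * p < G.degree v) :
    stp G < G.minDegree := by
  apply stp_lt_minDegree_of_edgeCount_lt
  have : Nonempty (Fin n) := ⟨⟨0, by omega⟩⟩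
  obtain ⟨v, hv⟩ := G.exists_minimal_degree_vertex
  set M : ℝ := ((n - 1 : ℕ) : ℝ) with hM
  have hnM : (n : ℝ) = M + 1 := by rw [hM, Nat.cast_sub (by omega)]; ring
  have hM12 : 12 ≤ M := by rw [hM]; exact_mod_cast (by omega : 12 ≤ n - 1)
  have hδv : 13 / 20 * M * p < G.minDegree := hv ▸ hδ v
  rw [Fintype.card_fin, ← Nat.cast_lt (α := ℝ), Nat.cast_mul]
  calc (edgeCount G : ℝ) < 6 / 5 * n.choose 2 * p := hE
    _ = 3 / 5 * (M + 1) * M * p := by rw [Nat.cast_choose_two, hnM]; ring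
    _ ≤ M * (13 / 20 * M * p) := by
        nlinarith [mul_nonneg (mul_nonneg (by linarith : (0 : ℝ) ≤ M) hp0)
          (by linarith : (0 : ℝ) ≤ M / 20 - 3 / 5)]
    _ < M * G.minDegree := by gcongr

noncomputable def weight (n : ℕ) (p : ℝ) (G : SimpleGraph (Fin n)) : ℝ :=
  p ^ edgeCount G * (1 - p) ^ (n.choose 2 - edgeCount G)

lemma weight_nonneg (hp0 : 0 ≤ p) (hp1 : p ≤ 1) (G : SimpleGraph (Fin n)) : 0 ≤ weight n p G :=
  mul_nonneg (pow_nonneg hp0 _) (pow_nonneg (sub_nonneg.2 hp1) _)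

lemma grProb_eq_sum (Q : SimpleGraph (Fin n) → Prop) :
    grProb n p Q = ∑ G, if Q G then weight n p G else 0 := rfl

lemma sum_graph_eq_sum_powerset (F : Finset (Sym2 (Fin n)) → ℝ) :
    ∑ G : SimpleGraph (Fin n), F G.edgeFinset
      = ∑ s ∈ (⊤ : SimpleGraph (Fin n)).edgeFinset.powerset, F s := by
  refine sum_nbij' (fun G => G.edgeFinset) (fun s => SimpleGraph.fromEdgeSet s)
    (fun G _ => mem_powerset.2 (SimpleGraph.edgeFinset_mono le_top)) (fun _ _ => mem_univ _)
    (fun G _ => by simp) (fun s hs => ?_) (fun _ _ => rfl)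
  rw [mem_powerset] at hs
  apply coe_injective
  rw [SimpleGraph.coe_edgeFinset, SimpleGraph.edgeSet_fromEdgeSet, sdiff_eq_left,
    Set.disjoint_left]
  intro e he hdiag
  simpa [hdiag] using hs he

/-- The edge indicators are independent Bernoulli(`p`) variables, so the generating function of
the number of edges inside a fixed set `A` of pairs factorises over `A`. -/
lemma sum_weight_mul_pow_card_inter (t : ℝ) {A : Finset (Sym2 (Fin n))}
    (hA : A ⊆ (⊤ : SimpleGraph (Fin n)).edgeFinset) :
    ∑ G, weight n p G * t ^ #(G.edgeFinset ∩ A) = (1 - p + p * t) ^ #A := by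
  set D := (⊤ : SimpleGraph (Fin n)).edgeFinset
  have hD : #D = n.choose 2 := by
    rw [SimpleGraph.card_edgeFinset_top_eq_card_choose_two, Fintype.card_fin]
  have hterm : ∀ s ∈ D.powerset, p ^ #s * (1 - p) ^ (n.choose 2 - #s) * t ^ #(s ∩ A)
      = (∏ e ∈ s, if e ∈ A then p * t else p) * ∏ _e ∈ D \ s, (1 - p) := by
    intro s hs
    rw [prod_ite, prod_const, prod_const, prod_const, filter_mem_eq_inter, ← sdiff_eq_filter,
      card_sdiff_of_subset (mem_powerset.1 hs), hD, mul_pow,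
      ← card_inter_add_card_sdiff s A, pow_add]
    ring
  calc ∑ G, weight n p G * t ^ #(G.edgeFinset ∩ A)
      = ∑ s ∈ D.powerset, p ^ #s * (1 - p) ^ (n.choose 2 - #s) * t ^ #(s ∩ A) :=
        sum_graph_eq_sum_powerset fun s => p ^ #s * (1 - p) ^ (n.choose 2 - #s) * t ^ #(s ∩ A)
    _ = ∏ e ∈ D, ((if e ∈ A then p * t else p) + (1 - p)) := by
        rw [sum_congr rfl hterm, prod_add]
    _ = ∏ e ∈ D, if e ∈ A then 1 - p + p * t else 1 :=
        prod_congr rfl fun e _ => by split <;> ring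
    _ = (1 - p + p * t) ^ #A := by
        rw [prod_ite_mem, inter_eq_right.2 hA, prod_const]

lemma sum_weight_mul_pow_edgeCount (t : ℝ) :
    ∑ G, weight n p G * t ^ edgeCount G = (1 - p + p * t) ^ n.choose 2 := by
  have hG : ∀ G : SimpleGraph (Fin n), G.edgeFinset ∩ (⊤ : SimpleGraph (Fin n)).edgeFinset
      = G.edgeFinset := fun G => inter_eq_left.2 (SimpleGraph.edgeFinset_mono le_top)
  have := sum_weight_mul_pow_card_inter (p := p) t
    (subset_refl (⊤ : SimpleGraph (Fin n)).edgeFinset)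
  rw [SimpleGraph.card_edgeFinset_top_eq_card_choose_two, Fintype.card_fin] at this
  simp only [hG] at this
  exact this

lemma sum_weight_mul_pow_degree (t : ℝ) (v : Fin n) :
    ∑ G, weight n p G * t ^ G.degree v = (1 - p + p * t) ^ (n - 1) := by
  have hG : ∀ G : SimpleGraph (Fin n),
      G.edgeFinset ∩ (⊤ : SimpleGraph (Fin n)).incidenceFinset v = G.incidenceFinset v := by
    intro G
    rw [SimpleGraph.incidenceFinset_eq_filter, SimpleGraph.incidenceFinset_eq_filter, inter_filter,
      inter_eq_left.2 (SimpleGraph.edgeFinset_mono le_top)]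
  have := sum_weight_mul_pow_card_inter (p := p) t
    (SimpleGraph.incidenceFinset_subset (⊤ : SimpleGraph (Fin n)) v)
  simpa [hG, SimpleGraph.card_incidenceFinset_eq_degree] using this

lemma sum_weight_eq_one : ∑ G, weight n p G = 1 := by
  simpa using sum_weight_mul_pow_edgeCount (n := n) (p := p) 1

lemma grProb_add_grProb_not (Q : SimpleGraph (Fin n) → Prop) :
    grProb n p Q + grProb n p (fun G => ¬Q G) = 1 := by
  rw [grProb_eq_sum, grProb_eq_sum, ← sum_add_distrib, ← sum_weight_eq_one (n := n) (p := p)]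
  exact sum_congr rfl fun G _ => by by_cases h : Q G <;> simp [h]

section NonnegWeights

variable (hp0 : 0 ≤ p) (hp1 : p ≤ 1)
include hp0 hp1

lemma grProb_nonneg (Q : SimpleGraph (Fin n) → Prop) : 0 ≤ grProb n p Q :=
  sum_nonneg fun G _ => ite_nonneg (weight_nonneg hp0 hp1 G) le_rfl

lemma grProb_le_one (Q : SimpleGraph (Fin n) → Prop) : grProb n p Q ≤ 1 := by
  linarith [grProb_add_grProb_not (p := p) Q, grProb_nonneg hp0 hp1 fun G => ¬Q G]

lemma grProb_mono {Q R : SimpleGraph (Fin n) → Prop} (h : ∀ G, Q G → R G) :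
    grProb n p Q ≤ grProb n p R := by
  rw [grProb_eq_sum, grProb_eq_sum]
  refine sum_le_sum fun G _ => ?_
  by_cases hQ : Q G
  · rw [if_pos hQ, if_pos (h G hQ)]
  · exact (if_neg hQ).trans_le (ite_nonneg (weight_nonneg hp0 hp1 G) le_rfl)

lemma grProb_or_le (Q R : SimpleGraph (Fin n) → Prop) :
    grProb n p (fun G => Q G ∨ R G) ≤ grProb n p Q + grProb n p R := by
  rw [grProb_eq_sum, grProb_eq_sum, grProb_eq_sum, ← sum_add_distrib]
  refine sum_le_sum fun G _ => ?_
  have hw := weight_nonneg hp0 hp1 G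
  by_cases hQ : Q G <;> by_cases hR : R G <;> simp [hQ, hR, hw]

lemma grProb_exists_le {ι : Type*} [Fintype ι] (Q : ι → SimpleGraph (Fin n) → Prop) :
    grProb n p (fun G => ∃ i, Q i G) ≤ ∑ i, grProb n p (Q i) := by
  simp only [grProb_eq_sum]
  rw [sum_comm]
  refine sum_le_sum fun G _ => ?_
  have hterm : ∀ i, 0 ≤ if Q i G then weight n p G else 0 :=
    fun i => ite_nonneg (weight_nonneg hp0 hp1 G) le_rfl
  by_cases h : ∃ i, Q i G
  · obtain ⟨i, hi⟩ := h
    rw [if_pos ⟨i, hi⟩]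
    calc weight n p G = if Q i G then weight n p G else 0 := (if_pos hi).symm
      _ ≤ ∑ j, if Q j G then weight n p G else 0 :=
          single_le_sum (f := fun j => if Q j G then weight n p G else 0)
            (fun j _ => hterm j) (mem_univ i)
  · simpa [h] using sum_nonneg fun i _ => hterm i

/-- Chernoff's bound: Markov's inequality applied to `exp (s * X)`. -/
lemma grProb_le_exp_of_sum_weight_mul_pow {X : SimpleGraph (Fin n) → ℕ} {m : ℕ}
    (hX : ∀ t, ∑ G, weight n p G * t ^ X G = (1 - p + p * t) ^ m)
    {Q : SimpleGraph (Fin n) → Prop} (s c : ℝ) (hQ : ∀ G, Q G → s * c ≤ s * X G) :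
    grProb n p Q ≤ Real.exp (m * p * (Real.exp s - 1) - s * c) := by
  have hmarkov : grProb n p Q ≤ ∑ G, weight n p G * Real.exp (s * X G - s * c) := by
    refine sum_le_sum fun G _ => ?_
    have hw := weight_nonneg hp0 hp1 G
    split_ifs with hG
    · exact le_mul_of_one_le_right hw (Real.one_le_exp (sub_nonneg.2 (hQ G hG)))
    · positivity
  have hbase : 0 ≤ 1 + p * (Real.exp s - 1) := by nlinarith [Real.exp_pos s]
  calc grProb n p Q ≤ ∑ G, weight n p G * Real.exp (s * X G - s * c) := hmarkov
    _ = (∑ G, weight n p G * Real.exp s ^ X G) * Real.exp (-(s * c)) := by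
        rw [sum_mul]
        refine sum_congr rfl fun G _ => ?_
        rw [sub_eq_add_neg, Real.exp_add, mul_comm s, Real.exp_nat_mul, mul_assoc]
    _ = (1 + p * (Real.exp s - 1)) ^ m * Real.exp (-(s * c)) := by rw [hX]; ring_nf
    _ ≤ Real.exp (p * (Real.exp s - 1)) ^ m * Real.exp (-(s * c)) := by
        gcongr
        linarith [Real.add_one_le_exp (p * (Real.exp s - 1))]
    _ = Real.exp (m * p * (Real.exp s - 1) - s * c) := by
        rw [← Real.exp_nat_mul, ← Real.exp_add]
        ring_nf

lemma grProb_edgeCount_ge_le :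
    grProb n p (fun G => 6 / 5 * n.choose 2 * p ≤ edgeCount G)
      ≤ Real.exp (-(n.choose 2 * p / 100)) := by
  refine (grProb_le_exp_of_sum_weight_mul_pow hp0 hp1 sum_weight_mul_pow_edgeCount (1 / 10)
    (6 / 5 * n.choose 2 * p) fun G hG => by linarith).trans (Real.exp_le_exp.2 ?_)
  have hexp : Real.exp (1 / 10) - 1 ≤ 1 / 10 + 1 / 100 := by
    have := (abs_le.1 (Real.abs_exp_sub_one_sub_id_le (x := 1 / 10) (by norm_num))).2
    linarith
  have hNp : 0 ≤ (n.choose 2 : ℝ) * p := by positivity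
  nlinarith

lemma grProb_degree_le_le (v : Fin n) :
    grProb n p (fun G => (G.degree v : ℝ) ≤ 13 / 20 * (n - 1 : ℕ) * p)
      ≤ Real.exp (-(49 / 1600 * ((n - 1 : ℕ) * p))) := by
  refine (grProb_le_exp_of_sum_weight_mul_pow hp0 hp1 (sum_weight_mul_pow_degree · v) (-(7 / 40))
    (13 / 20 * (n - 1 : ℕ) * p) fun G hG => by linarith).trans (Real.exp_le_exp.2 ?_)
  have hexp : Real.exp (-(7 / 40)) - 1 ≤ -(7 / 40) + 49 / 1600 := by
    have := (abs_le.1 (Real.abs_exp_sub_one_sub_id_le (x := -(7 / 40)) (by norm_num))).2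
    linarith
  have hMp : 0 ≤ ((n - 1 : ℕ) : ℝ) * p := by positivity
  nlinarith

lemma one_sub_grProb_stp_lt_minDegree_le (hn : 13 ≤ n) :
    1 - grProb n p (fun G => stp G < G.minDegree)
      ≤ (n + 1) * Real.exp (-(49 / 1600 * ((n - 1 : ℕ) * p))) := by
  set M : ℝ := ((n - 1 : ℕ) : ℝ) with hM
  have hnM : (n : ℝ) = M + 1 := by rw [hM, Nat.cast_sub (by omega)]; ring
  have hM12 : 12 ≤ M := by rw [hM]; exact_mod_cast (by omega : 12 ≤ n - 1)
  have hedge : Real.exp (-(n.choose 2 * p / 100)) ≤ Real.exp (-(49 / 1600 * (M * p))) := by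
    rw [Real.exp_le_exp, Nat.cast_choose_two, hnM]
    have : 0 ≤ M * p := by positivity
    nlinarith
  calc 1 - grProb n p (fun G => stp G < G.minDegree)
      = grProb n p (fun G => ¬stp G < G.minDegree) := by
        linarith [grProb_add_grProb_not (n := n) (p := p) fun G => stp G < G.minDegree]
    _ ≤ grProb n p (fun G => 6 / 5 * n.choose 2 * p ≤ edgeCount G ∨
          ∃ v, (G.degree v : ℝ) ≤ 13 / 20 * M * p) :=
        grProb_mono hp0 hp1 fun G hG => by
          by_contra! h
          exact hG (stp_lt_minDegree_of_bounds hp0 hn G h.1 h.2)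
    _ ≤ grProb n p (fun G => 6 / 5 * n.choose 2 * p ≤ edgeCount G) +
          ∑ v, grProb n p (fun G => (G.degree v : ℝ) ≤ 13 / 20 * M * p) :=
        (grProb_or_le hp0 hp1 _ _).trans (add_le_add le_rfl (grProb_exists_le hp0 hp1 _))
    _ ≤ Real.exp (-(n.choose 2 * p / 100)) + ∑ _v : Fin n, Real.exp (-(49 / 1600 * (M * p))) :=
        add_le_add (grProb_edgeCount_ge_le hp0 hp1)
          (sum_le_sum fun v _ => grProb_degree_le_le hp0 hp1 v)
    _ ≤ (n + 1) * Real.exp (-(49 / 1600 * (M * p))) := by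
        rw [sum_const, card_univ, Fintype.card_fin, nsmul_eq_mul]
        linarith

end NonnegWeights

lemma fifty_log_le_pred_mul {n : ℕ} {p : ℝ} (hn : 51 ≤ n) (hp1 : p ≤ 1)
    (hlow : 51 * Real.log n / n ≤ p) : 50 * Real.log n ≤ (n - 1 : ℕ) * p := by
  have hn51 : (51 : ℝ) ≤ n := by exact_mod_cast hn
  have hlog : 1 ≤ Real.log n := by
    rw [Real.le_log_iff_exp_le (by linarith)]
    linarith [Real.exp_one_lt_d9]
  rw [div_le_iff₀ (by linarith)] at hlow
  rw [Nat.cast_sub (by omega), Nat.cast_one]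
  linarith

/-- Since `(n - 1) p ≥ 50 log n`, the bound is at most `2 n · n ^ (-49/32) = 2 n ^ (-17/32)`. -/
lemma tendsto_succ_mul_exp_neg_pred_mul {p : ℕ → ℝ} (hp1 : ∀ n, p n ≤ 1)
    (hlow : ∀ᶠ n : ℕ in atTop, 51 * Real.log n / n ≤ p n) :
    Tendsto (fun n : ℕ => (n + 1 : ℝ) * Real.exp (-(49 / 1600 * ((n - 1 : ℕ) * p n))))
      atTop (nhds 0) := by
  have hlim : Tendsto (fun n : ℕ => 2 * Real.exp (-(17 / 32) * Real.log n)) atTop (nhds 0) := by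
    simpa using ((Real.tendsto_exp_atBot.comp ((Real.tendsto_log_atTop.comp
      tendsto_natCast_atTop_atTop).const_mul_atTop_of_neg (by norm_num : -(17 / 32 : ℝ) < 0)))
      ).const_mul 2
  refine squeeze_zero' (Eventually.of_forall fun n => by positivity) ?_ hlim
  filter_upwards [hlow, eventually_ge_atTop 51] with n hl hn
  have hn1 : (1 : ℝ) ≤ n := by exact_mod_cast (by omega : 1 ≤ n)
  have h50 := fifty_log_le_pred_mul hn (hp1 n) hl
  calc (n + 1 : ℝ) * Real.exp (-(49 / 1600 * ((n - 1 : ℕ) * p n)))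
      ≤ (2 * n) * Real.exp (-(49 / 32) * Real.log n) := by
        gcongr
        · linarith
        · linarith
    _ = 2 * Real.exp (-(17 / 32) * Real.log n) := by
        rw [mul_assoc, ← Real.exp_log (by linarith : (0 : ℝ) < n), ← Real.exp_add, Real.log_exp]
        ring_nf

end ErdosRenyi

theorem aas_stp_lt_minDegree (p : ℕ → ℝ) (hp0 : ∀ n, 0 ≤ p n) (hp1 : ∀ n, p n ≤ 1)
    (hlow : ∀ᶠ n : ℕ in Filter.atTop, 51 * Real.log n / n ≤ p n) :
    Filter.Tendsto
      (fun n : ℕ => grProb n (p n) fun G => stp G < G.minDegree)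
      Filter.atTop (nhds 1) := by
  have hbad := ErdosRenyi.tendsto_succ_mul_exp_neg_pred_mul hp1 hlow
  refine tendsto_of_tendsto_of_tendsto_of_le_of_le' (by simpa using tendsto_const_nhds.sub hbad)
    tendsto_const_nhds ?_ (Eventually.of_forall fun n => ErdosRenyi.grProb_le_one (hp0 n) (hp1 n) _)
  filter_upwards [eventually_ge_atTop 13] with n hn
  linarith [ErdosRenyi.one_sub_grProb_stp_lt_minDegree_le (hp0 n) (hp1 n) hn]
end
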